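/- Let (M_n)_{n ≥ m} be a nonnegative reverse submartingale with sup_n E[M_n^β] dominated by E[M_m^β] for some β > 1. Then E[ sup_{n ≥ m} M_n ] ≤ 1 + E[M_m^β]/(β - 1). -/

import Mathlib

/-!
Reading the window `m, …, m + N` backwards turns the reverse submartingale into an ordinary
submartingale that ends at `M m`, so Doob's maximal inequality followed by Hölder's inequality
gives `t ^ β * P(max_{m ≤ n ≤ m + N} M n ≥ t) ≤ E[M m ^ β]`. In the layer-cake formula the tail
is bounded by `1` on `(0, 1]` and by `E[M m ^ β] * t ^ (-β)` on `(1, ∞)`, which integrates to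
`1 + E[M m ^ β] / (β - 1)`; monotone convergence in `N` passes to the supremum over all `n ≥ m`.
-/

open MeasureTheory Set Finset
open scoped ENNReal

namespace MeasureTheory

variable {Ω ι κ : Type*} {m0 : MeasurableSpace Ω}

def Filtration.comap [Preorder ι] [Preorder κ] (ℱ : Filtration ι m0) {a : κ → ι}
    (ha : Monotone a) : Filtration κ m0 where
  seq k := ℱ (a k)
  mono' _ _ hij := ℱ.mono (ha hij)
  le' k := ℱ.le (a k)

theorem Submartingale.comp_monotone [Preorder ι] [Preorder κ] {E : Type*}
    [NormedAddCommGroup E] [NormedSpace ℝ E] [CompleteSpace E] [LE E] {μ : Measure Ω}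
    {ℱ : Filtration ι m0} {f : ι → Ω → E} (hf : Submartingale f ℱ μ) {a : κ → ι}
    (ha : Monotone a) : Submartingale (fun k => f (a k)) (ℱ.comap ha) μ :=
  ⟨fun k => hf.stronglyAdapted (a k), fun _ _ hij => hf.ae_le_condExp (ha hij),
    fun k => hf.integrable (a k)⟩

end MeasureTheory

theorem partialSups_reflect {α : Type*} [SemilatticeSup α] (f : ℕ → α) (N : ℕ) :
    partialSups (fun k => f (N - k)) N = partialSups f N :=
  le_antisymm (partialSups_le _ _ _ fun k _ => le_partialSups_of_le f (Nat.sub_le N k))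
    (partialSups_le _ _ _ fun k hk => by
      simpa [Nat.sub_sub_self hk] using le_partialSups_of_le (fun k => f (N - k)) (Nat.sub_le N k))

theorem Monotone.iSup_comp_partialSups {ι α β : Type*} [Preorder ι] [LocallyFiniteOrderBot ι]
    [LinearOrder α] [CompleteLattice β] {φ : α → β} (hφ : Monotone φ) (g : ι → α) :
    ⨆ i, φ (partialSups g i) = ⨆ i, φ (g i) := by
  refine le_antisymm (iSup_le fun i => ?_) (iSup_mono fun i => hφ (le_partialSups g i))
  obtain ⟨j, -, hj⟩ := exists_partialSups_eq g i
  exact hj ▸ le_iSup (fun i => φ (g i)) j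

theorem iSup_subtype_le_eq_iSup_add {α : Type*} [CompleteLattice α] (m : ℕ) (f : ℕ → α) :
    ⨆ n : {k : ℕ // m ≤ k}, f n = ⨆ k, f (m + k) :=
  le_antisymm (iSup_le fun n => le_iSup_of_le (n - m) (by rw [Nat.add_sub_cancel' n.2]))
    (iSup_le fun k => le_iSup_of_le ⟨m + k, Nat.le_add_right m k⟩ le_rfl)

theorem lintegral_Ioi_one_ofReal_rpow_neg {β : ℝ} (hβ : 1 < β) :
    ∫⁻ t in Ioi (1 : ℝ), ENNReal.ofReal t ^ (-β) = (ENNReal.ofReal (β - 1))⁻¹ := by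
  have hpos : ∀ t ∈ Ioi (1 : ℝ), ENNReal.ofReal t ^ (-β) = ENNReal.ofReal (t ^ (-β)) :=
    fun t ht => ENNReal.ofReal_rpow_of_pos (one_pos.trans ht)
  rw [setLIntegral_congr_fun measurableSet_Ioi hpos, ← ofReal_integral_eq_lintegral_ofReal
    (integrableOn_Ioi_rpow_of_lt (by linarith) one_pos)
    (ae_restrict_of_forall_mem measurableSet_Ioi fun t ht =>
      Real.rpow_nonneg (one_pos.trans ht).le _),
    integral_Ioi_rpow_of_lt (by linarith) one_pos, Real.one_rpow,
    ← ENNReal.ofReal_inv_of_pos (by linarith)]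
  congr 1
  rw [neg_div, ← div_neg, neg_add_eq_sub, neg_sub, one_div]

theorem rpow_mul_measure_le_lintegral_rpow_of_mul_measure_le_setLIntegral {α : Type*}
    [MeasurableSpace α] {μ : Measure α} {f : α → ℝ≥0∞} (hf : AEMeasurable f μ) {A : Set α}
    (hA : μ A ≠ ∞) {p : ℝ} (hp : 1 < p) {c : ℝ≥0∞} (h : c * μ A ≤ ∫⁻ ω in A, f ω ∂μ) :
    c ^ p * μ A ≤ ∫⁻ ω, f ω ^ p ∂μ := by
  rcases eq_or_ne (μ A) 0 with hA0 | hA0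
  · simp [hA0]
  have hpq : p.HolderConjugate p.conjExponent := .conjExponent hp
  have hp0 : 0 < p := one_pos.trans hp
  set q := p.conjExponent
  have holder : ∫⁻ ω in A, f ω ∂μ ≤ (∫⁻ ω, f ω ^ p ∂μ) ^ (1 / p) * μ A ^ (1 / q) := by
    have := ENNReal.lintegral_mul_le_Lp_mul_Lq (μ.restrict A) hpq hf.restrict
      (aemeasurable_const (b := (1 : ℝ≥0∞)))
    simp only [Pi.mul_apply, mul_one, ENNReal.one_rpow, setLIntegral_const, one_mul] at this
    exact this.trans (by gcongr; exact Measure.restrict_le_self)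
  have hsplit : μ A = μ A ^ (1 / p) * μ A ^ (1 / q) := by
    rw [← ENNReal.rpow_add _ _ hA0 hA, hpq.one_div_add_one_div, div_one, ENNReal.rpow_one]
  have hcancel : c * μ A ^ (1 / p) ≤ (∫⁻ ω, f ω ^ p ∂μ) ^ (1 / p) := by
    rw [hsplit, ← mul_assoc] at h
    exact (ENNReal.mul_le_mul_iff_left (by simp [hA0, hA]) (by simp [hA0, hA, hpq.symm.pos])).1
      (h.trans holder)
  have := ENNReal.rpow_le_rpow hcancel hp0.le
  rwa [ENNReal.mul_rpow_of_nonneg _ _ hp0.le, ← ENNReal.rpow_mul, ← ENNReal.rpow_mul,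
    one_div_mul_cancel hp0.ne', ENNReal.rpow_one, ENNReal.rpow_one] at this

theorem lintegral_ofReal_le_of_rpow_mul_measure_le {α : Type*} [MeasurableSpace α]
    {μ : Measure α} {g : α → ℝ} (hg0 : 0 ≤ g) (hg : AEMeasurable g μ) {β : ℝ} (hβ : 1 < β)
    {C : ℝ≥0∞} (h : ∀ t, 1 < t → ENNReal.ofReal t ^ β * μ {ω | t ≤ g ω} ≤ C) :
    ∫⁻ ω, ENNReal.ofReal (g ω) ∂μ ≤ μ univ + C / ENNReal.ofReal (β - 1) := by
  rw [lintegral_eq_lintegral_meas_le μ (ae_of_all _ hg0) hg,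
    ← Ioc_union_Ioi_eq_Ioi zero_le_one, lintegral_union measurableSet_Ioi (Ioc_disjoint_Ioi le_rfl)]
  gcongr
  · calc ∫⁻ t in Ioc (0 : ℝ) 1, μ {ω | t ≤ g ω}
        ≤ ∫⁻ _ in Ioc (0 : ℝ) 1, μ univ := setLIntegral_mono measurable_const
          fun _ _ => measure_mono (subset_univ _)
      _ = μ univ := by simp
  · have htail : ∀ t ∈ Ioi (1 : ℝ), μ {ω | t ≤ g ω} ≤ C * ENNReal.ofReal t ^ (-β) := by
      intro t ht
      have ht0 : 0 < t := one_pos.trans ht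
      rw [ENNReal.rpow_neg, ← div_eq_mul_inv, ENNReal.le_div_iff_mul_le
        (.inl (by simp [ht0])) (.inl (by simp [(one_pos.trans hβ).le])), mul_comm]
      exact h t ht
    calc ∫⁻ t in Ioi (1 : ℝ), μ {ω | t ≤ g ω}
        ≤ ∫⁻ t in Ioi (1 : ℝ), C * ENNReal.ofReal t ^ (-β) :=
          setLIntegral_mono (by fun_prop) htail
      _ = C / ENNReal.ofReal (β - 1) := by
          rw [lintegral_const_mul _ (by fun_prop), div_eq_mul_inv,
            lintegral_Ioi_one_ofReal_rpow_neg hβ]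

section ReverseSubmartingale

variable {Ω : Type*} {m0 : MeasurableSpace Ω} {μ : Measure Ω} [IsFiniteMeasure μ]
  {M : ℕ → Ω → ℝ} {ℱ : Filtration ℕᵒᵈ m0}

theorem reverse_maximal_ineq (hM : Submartingale (fun n : ℕᵒᵈ => M (OrderDual.ofDual n)) ℱ μ)
    (hnonneg : 0 ≤ M) {t : ℝ} (ht : 0 ≤ t) (m N : ℕ) :
    ENNReal.ofReal t * μ {ω | t ≤ partialSups (fun k => M (m + k)) N ω} ≤
      ∫⁻ ω in {ω | t ≤ partialSups (fun k => M (m + k)) N ω}, ENNReal.ofReal (M m ω) ∂μ := by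
  have ha : Monotone fun k => OrderDual.toDual (m + (N - k)) := fun i j hij => by
    simp only [OrderDual.toDual_le_toDual]; omega
  have hmax := maximal_ineq (hM.comp_monotone ha) (fun k => hnonneg (m + (N - k)))
    (ε := t.toNNReal) N
  have hreflect : ∀ ω, (range (N + 1)).sup' nonempty_range_add_one
      (fun k => M (m + (N - k)) ω) = partialSups (fun k => M (m + k)) N ω := fun ω => by
    rw [← partialSups_eq_sup'_range, Pi.partialSups_apply,
      partialSups_reflect (fun k => M (m + k) ω)]
  simp only [OrderDual.ofDual_toDual, Real.coe_toNNReal t ht, hreflect, Nat.sub_self,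
    add_zero] at hmax
  exact hmax.trans_eq <| ofReal_integral_eq_lintegral_ofReal
    (hM.integrable (OrderDual.toDual m)).integrableOn (ae_of_all _ (hnonneg m))

theorem reverse_rpow_mul_measure_le
    (hM : Submartingale (fun n : ℕᵒᵈ => M (OrderDual.ofDual n)) ℱ μ) (hnonneg : 0 ≤ M)
    {β : ℝ} (hβ : 1 < β) {t : ℝ} (ht : 0 ≤ t) (m N : ℕ) :
    ENNReal.ofReal t ^ β * μ {ω | t ≤ partialSups (fun k => M (m + k)) N ω} ≤
      ∫⁻ ω, ENNReal.ofReal (M m ω ^ β) ∂μ := by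
  have hMm : Integrable (M m) μ := hM.integrable (OrderDual.toDual m)
  have := rpow_mul_measure_le_lintegral_rpow_of_mul_measure_le_setLIntegral
    hMm.aemeasurable.ennreal_ofReal (measure_ne_top μ _) hβ
    (reverse_maximal_ineq hM hnonneg ht m N)
  simpa only [ENNReal.ofReal_rpow_of_nonneg (hnonneg m _) (zero_le_one.trans hβ.le)] using this

end ReverseSubmartingale

theorem stmt_4_general {Ω : Type*} {m0 : MeasurableSpace Ω} (μ : Measure Ω) [IsProbabilityMeasure μ]
    (m : ℕ) (M : ℕ → Ω → ℝ)
    (ℱ : Filtration ℕᵒᵈ m0)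
    (hrsub : Submartingale (fun n : ℕᵒᵈ => M (OrderDual.ofDual n)) ℱ μ)
    (hnonneg : ∀ n ω, 0 ≤ M n ω)
    (β : ℝ) (hβ : 1 < β) :
    ∫⁻ ω, (⨆ n : {k : ℕ // m ≤ k}, ENNReal.ofReal (M (n : ℕ) ω)) ∂μ ≤
      1 + (∫⁻ ω, ENNReal.ofReal (M m ω ^ β) ∂μ) / ENNReal.ofReal (β - 1) := by
  set S := partialSups fun k => M (m + k)
  have hS_meas : ∀ N, Measurable (S N) := fun N => by
    rw [partialSups_eq_sup'_range]
    exact Finset.measurable_sup' _ fun k _ =>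
      ((hrsub.stronglyMeasurable (OrderDual.toDual (m + k))).mono (ℱ.le _)).measurable
  have hS_nonneg : ∀ N, 0 ≤ S N := fun N =>
    (show 0 ≤ M (m + 0) from hnonneg (m + 0)).trans
      (le_partialSups_of_le (fun k => M (m + k)) N.zero_le)
  have hsup : ∀ ω, ⨆ n : {k : ℕ // m ≤ k}, ENNReal.ofReal (M n ω) =
      ⨆ N, ENNReal.ofReal (S N ω) := fun ω => by
    simp only [S, Pi.partialSups_apply, ENNReal.ofReal_mono.iSup_comp_partialSups,
      iSup_subtype_le_eq_iSup_add m fun n => ENNReal.ofReal (M n ω)]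
  simp_rw [hsup]
  rw [lintegral_iSup (fun N => (hS_meas N).ennreal_ofReal)
    fun i j hij ω => ENNReal.ofReal_le_ofReal (S.monotone hij ω)]
  refine iSup_le fun N => ?_
  simpa only [measure_univ] using lintegral_ofReal_le_of_rpow_mul_measure_le (hS_nonneg N)
    (hS_meas N).aemeasurable hβ fun t ht =>
      reverse_rpow_mul_measure_le hrsub hnonneg hβ (one_pos.trans ht).le m N

/-- If `(M n)_{n ≥ m}` is a nonnegative reverse submartingale (a submartingale
with respect to the reversed order on `ℕ` and a decreasing filtration) with
`E[M n ^ β] ≤ E[M m ^ β]` for all `n ≥ m`, where `β > 1`, then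
`E[sup_{n ≥ m} M n] ≤ 1 + E[M m ^ β] / (β - 1)`. -/
theorem stmt_4 {Ω : Type*} {m0 : MeasurableSpace Ω} (μ : Measure Ω) [IsProbabilityMeasure μ]
    (m : ℕ) (M : ℕ → Ω → ℝ)
    (ℱ : Filtration ℕᵒᵈ m0)
    (hrsub : Submartingale (fun n : ℕᵒᵈ => M (OrderDual.ofDual n)) ℱ μ)
    (hnonneg : ∀ n ω, 0 ≤ M n ω)
    (β : ℝ) (hβ : 1 < β)
    (hdom : ∀ n, m ≤ n →
      ∫⁻ ω, ENNReal.ofReal (M n ω ^ β) ∂μ ≤ ∫⁻ ω, ENNReal.ofReal (M m ω ^ β) ∂μ) :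
    ∫⁻ ω, (⨆ n : {k : ℕ // m ≤ k}, ENNReal.ofReal (M (n : ℕ) ω)) ∂μ ≤
      1 + (∫⁻ ω, ENNReal.ofReal (M m ω ^ β) ∂μ) / ENNReal.ofReal (β - 1) :=
  stmt_4_general μ m M ℱ hrsub hnonneg β hβ
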